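/- arXiv:2112.11954 — 5 statements merged into one kernel-verified Lean document; each statement's English description precedes it below -/
import Mathlib

section
/- The hat operator on classes of filters is idempotent: for any class D of filters on a set X, the hat of the hat of D equals the hat of D, where the hat of D consists of all filters H such that for every ultrafilter U refining H there exists a filter D ∈ D with H ≤ D ≤ U. -/
/-- The hat of a class of filters. -/
def hatC {X : Type*} (𝔻 : Set (Filter X)) : Set (Filter X) :=
  {H | H.NeBot ∧ ∀ U : Ultrafilter X, ↑U ≤ H → ∃ D ∈ 𝔻, ↑U ≤ D ∧ D ≤ H}

/-- The hat operator is idempotent (for classes of proper filters). -/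
theorem stmt_3 {X : Type*} (𝔻 : Set (Filter X)) (h𝔻 : ∀ F ∈ 𝔻, Filter.NeBot F) :
    hatC (hatC 𝔻) = hatC 𝔻 := by
  have hsub : 𝔻 ⊆ hatC 𝔻 := fun D hD =>
    ⟨h𝔻 D hD, fun U hU => ⟨D, hD, hU, le_refl D⟩⟩
  ext H
  constructor
  · rintro ⟨hne, hH⟩
    refine ⟨hne, fun U hU => ?_⟩
    obtain ⟨D', ⟨_, hD'⟩, hUD', hD'H⟩ := hH U hU
    obtain ⟨D, hD, hUD, hDD'⟩ := hD' U hUD'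
    exact ⟨D, hD, hUD, hDD'.trans hD'H⟩
  · rintro ⟨hne, hH⟩
    refine ⟨hne, fun U hU => ?_⟩
    obtain ⟨D, hD, hUD, hDH⟩ := hH U hU
    exact ⟨D, hsub hD, hUD, hDH⟩
end

section
/- The hat of the class of principal filters on X equals the class of principal filters: if a proper filter H has the property that for every ultrafilter U refining H there is a principal filter D with H ≤ D ≤ U, then H is itself principal. -/
open Filter

/-- The hat of the class of principal filters is the class of principal filters
(among proper filters). -/
theorem stmt_7 {X : Type*} :
    hatC {F : Filter X | ∃ A : Set X, F = 𝓟 A} ∩ {F | F.NeBot}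
      = {F : Filter X | ∃ A : Set X, F = 𝓟 A} ∩ {F | F.NeBot} := by
  ext H
  simp only [Set.mem_inter_iff, Set.mem_setOf_eq, hatC]
  constructor
  · rintro ⟨⟨hne, hU⟩, -⟩
    refine ⟨?_, hne⟩
    by_contra hnp
    push_neg at hnp
    -- kernel
    have hker : 𝓟 H.ker ≤ H := fun s hs =>
      mem_principal.mpr (Set.sInter_subset_of_mem hs)
    have hmesh : H.NeBot → (H ⊓ 𝓟 H.kerᶜ).NeBot := by
      intro _
      rw [Filter.inf_principal_neBot_iff]
      intro s hs
      by_contra hempty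
      rw [Set.not_nonempty_iff_eq_empty] at hempty
      have hsub : s ⊆ H.ker := by
        intro x hx
        by_contra hxk
        exact absurd hempty (Set.nonempty_iff_ne_empty.mp ⟨x, hx, hxk⟩)
      have hkH : H.ker ∈ H := mem_of_superset hs hsub
      have : H = 𝓟 H.ker := le_antisymm (le_principal_iff.mpr hkH) hker
      exact hnp H.ker this
    haveI := hmesh hne
    obtain ⟨U, hUle⟩ := Filter.exists_ultrafilter_le (H ⊓ 𝓟 H.kerᶜ)
    obtain ⟨D, ⟨A, rfl⟩, hUD, hDH⟩ := hU U (hUle.trans inf_le_left)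
    have hAker : A ⊆ H.ker := Filter.subset_ker.mpr fun t ht => mem_principal.mp (hDH ht)
    have hAU : A ∈ U := le_principal_iff.mp hUD
    have hkcU : H.kerᶜ ∈ U := hUle.trans inf_le_right (mem_principal_self _)
    have : (A ∩ H.kerᶜ : Set X) ∈ U := inter_mem hAU hkcU
    have hne2 : (A ∩ H.kerᶜ : Set X).Nonempty := Ultrafilter.nonempty_of_mem this
    obtain ⟨x, hxA, hxk⟩ := hne2
    exact hxk (hAker hxA)
  · rintro ⟨⟨A, rfl⟩, hne⟩
    exact ⟨⟨hne, fun U hU => ⟨𝓟 A, ⟨A, rfl⟩, hU, le_rfl⟩⟩, hne⟩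
end

section
/- Let Y be a set and λ > card Y an uncountable regular cardinal, and let C be the closed unbounded filter on λ. Then for each function f : λ → Y there exists a uniform λ-complete filter F on λ such that map f F = map f C and F does not mesh with C (i.e., F and C are disjoint as filters). -/
/-!
Since the club filter `C` is `λ`-complete and `|Y| < λ`, `map f C` is the principal filter of
the set `S` of points whose fiber is stationary. Take `F` principal on `R ∪ Z`, where `R` picks
one point in each fiber over `S` (so `f '' (R ∪ Z) = S`; `R` is bounded as `|R| < λ`) and `Z`
consists of the points of one stationary fiber `T` that are not limits of `T`. Then `Z` is
unbounded, hence of size `λ`, and `R ∪ Z` misses the club of limit points of `T` above `sup R`.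
-/

open Filter Set

variable {α : Type u}

/-- `A` is closed in the well-ordered type `α`: it contains the least upper bound
of each of its nonempty subsets that has one. -/
def IsClosedSet [LinearOrder α] (A : Set α) : Prop :=
  ∀ B ⊆ A, B.Nonempty → ∀ x, IsLUB B x → x ∈ A

/-- `A` is unbounded in `α`. -/
def IsUnboundedSet [LinearOrder α] (A : Set α) : Prop :=
  ∀ a : α, ∃ b ∈ A, a < b

/-- `A` is a club (closed unbounded) subset of `α`. -/
def IsClubSet [LinearOrder α] (A : Set α) : Prop :=
  IsClosedSet A ∧ IsUnboundedSet A

/-- The closed unbounded filter: the filter generated by the club subsets. -/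
def clubFilter (α : Type u) [LinearOrder α] : Filter α :=
  Filter.generate {A : Set α | IsClubSet A}

/-- A filter is uniform if each of its members has full cardinality. -/
def IsUniform (F : Filter α) : Prop :=
  ∀ s ∈ F, Cardinal.mk s = Cardinal.mk α

/-- A filter is `κ`-complete if it is closed under intersections of fewer than
`κ` of its members. -/
def IsComplete' (κ : Cardinal.{u}) (F : Filter α) : Prop :=
  ∀ (ι : Type u), Cardinal.mk ι < κ → ∀ s : ι → Set α, (∀ i, s i ∈ F) → (⋂ i, s i) ∈ F
open Cardinal

lemma isComplete'_principal (κ : Cardinal.{u}) (X : Set α) : IsComplete' κ (𝓟 X) :=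
  fun _ _ _ hs => mem_principal.2 (subset_iInter fun i => mem_principal.1 (hs i))

lemma isUniform_principal_iff {X : Set α} : IsUniform (𝓟 X) ↔ #X = #α :=
  ⟨fun h => h X (mem_principal_self X), fun h s hs =>
    (mk_set_le s).antisymm (h ▸ mk_le_mk_of_subset (mem_principal.1 hs))⟩

lemma map_eq_principal_of_isComplete' {Y : Type u} {κ : Cardinal.{u}} {F : Filter α}
    (hF : IsComplete' κ F) (hY : #Y < κ) (f : α → Y) :
    map f F = 𝓟 {y | ∃ᶠ x in F, f x = y} := by
  set S := {y | ∃ᶠ x in F, f x = y}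
  refine le_antisymm (le_principal_iff.2 ?_) fun T hT y hy => ?_
  · have hnull : ⋂ y : ↥Sᶜ, {x | f x ≠ y} ∈ F :=
      hF _ ((mk_set_le _).trans_lt hY) _ fun y => not_frequently.1 y.2
    refine mem_map.2 (mem_of_superset hnull fun x hx => by_contra fun hfx => ?_)
    exact mem_iInter.1 hx ⟨f x, hfx⟩ rfl
  · obtain ⟨x, rfl, hxT⟩ := (hy.and_eventually hT).exists
    exact hxT

section LinearOrder

variable [LinearOrder α]

lemma bddAbove_of_mk_lt (hreg : (#α).IsRegular) (hseg : ∀ x : α, #(Iio x) < #α)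
    {A : Set α} (hA : #A < #α) : BddAbove A := by
  by_contra hA'
  have hcover : (univ : Set α) ⊆ ⋃ a : A, Iio (a : α) := fun x _ => by
    obtain ⟨a, ha, hxa⟩ := not_bddAbove_iff.1 hA' x
    exact mem_iUnion.2 ⟨⟨a, ha⟩, hxa⟩
  refine (mk_univ.symm.trans_le (mk_le_mk_of_subset hcover)).not_gt ?_
  exact mk_iUnion_le_sum_mk.trans_lt (sum_lt_of_isRegular hreg hA fun a => hseg a)

lemma noMaxOrder_of_mk_Iio_lt (hα : ℵ₀ ≤ #α) (hseg : ∀ x : α, #(Iio x) < #α) :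
    NoMaxOrder α := by
  refine ⟨fun x => ?_⟩
  by_contra! hmax
  have hcover : (univ : Set α) ⊆ insert x (Iio x) := fun y _ =>
    (hmax y).eq_or_lt.imp id id
  refine (mk_univ.symm.trans_le ((mk_le_mk_of_subset hcover).trans mk_insert_le)).not_gt ?_
  exact add_lt_of_lt hα (hseg x) (one_lt_aleph0.trans_le hα)

lemma IsUnboundedSet.mk_eq (hreg : (#α).IsRegular) (hseg : ∀ x : α, #(Iio x) < #α)
    {A : Set α} (hA : IsUnboundedSet A) : #A = #α := by
  refine (mk_set_le A).antisymm (not_lt.1 fun hlt => ?_)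
  obtain ⟨b, hb⟩ := bddAbove_of_mk_lt hreg hseg hlt
  obtain ⟨c, hc, hbc⟩ := hA b
  exact (hb hc).not_gt hbc

lemma exists_isLUB_of_bddAbove [WellFoundedLT α] {A : Set α} (hA : BddAbove A) :
    ∃ x, IsLUB A x := by
  obtain ⟨m, hm, hmin⟩ := wellFounded_lt.has_min _ hA
  exact ⟨m, hm, fun v hv => not_lt.1 (hmin v hv)⟩

lemma exists_isLUB_of_countable [WellFoundedLT α] (hreg : (#α).IsRegular)
    (hunc : ℵ₀ < #α) (hseg : ∀ x : α, #(Iio x) < #α) {A : Set α} (hA : A.Countable) :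
    ∃ x, IsLUB A x :=
  exists_isLUB_of_bddAbove (bddAbove_of_mk_lt hreg hseg (hA.le_aleph0.trans_lt hunc))

lemma isLUB_of_forall_exists_le {u : ℕ → α} {x : α} (hx : IsLUB (range u) x) {B : Set α}
    (hBx : B ⊆ Iic x) (hB : ∀ n, ∃ c ∈ B, u n ≤ c) : IsLUB B x := by
  refine ⟨hBx, fun v hv => hx.2 ?_⟩
  rintro _ ⟨n, rfl⟩
  obtain ⟨c, hc, hnc⟩ := hB n
  exact hnc.trans (hv hc)

lemma exists_isLUB_iterate [WellFoundedLT α] (hreg : (#α).IsRegular)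
    (hunc : ℵ₀ < #α) (hseg : ∀ x : α, #(Iio x) < #α) {g : α → α} (hg : ∀ x, x < g x)
    (a : α) : ∃ x, a < x ∧ IsLUB (range fun n => g^[n] a) x := by
  obtain ⟨x, hx⟩ := exists_isLUB_of_countable hreg hunc hseg (countable_range fun n => g^[n] a)
  exact ⟨x, (hg a).trans_le (hx.1 ⟨1, rfl⟩), hx⟩

lemma IsUnboundedSet.nonempty [Nonempty α] {A : Set α} (hA : IsUnboundedSet A) :
    A.Nonempty :=
  let ⟨b, hb, _⟩ := hA (Classical.arbitrary α)
  ⟨b, hb⟩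

lemma isClubSet_Ioi [NoMaxOrder α] (a : α) : IsClubSet (Ioi a) := by
  refine ⟨fun B hB ⟨b, hb⟩ x hx => (hB hb).trans_le (hx.1 hb), fun c => ?_⟩
  obtain ⟨y, hy⟩ := exists_gt (max a c)
  exact ⟨y, (le_max_left a c).trans_lt hy, (le_max_right a c).trans_lt hy⟩

lemma isClubSet_iInter [WellFoundedLT α] [NoMaxOrder α] (hreg : (#α).IsRegular)
    (hunc : ℵ₀ < #α) (hseg : ∀ x : α, #(Iio x) < #α) {ι : Type u} (hι : #ι < #α)
    {s : ι → Set α} (hs : ∀ i, IsClubSet (s i)) : IsClubSet (⋂ i, s i) := by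
  refine ⟨fun B hB hBne x hx => mem_iInter.2 fun i =>
    (hs i).1 B (hB.trans (iInter_subset s i)) hBne x hx, fun a => ?_⟩
  have hstep : ∀ x, ∃ y, x < y ∧ ∀ i, ∃ c ∈ s i, x < c ∧ c ≤ y := by
    intro x
    choose c hc hxc using fun i => (hs i).2 x
    obtain ⟨b, hb⟩ := bddAbove_of_mk_lt hreg hseg (mk_range_le.trans_lt hι)
    obtain ⟨x', hx'⟩ := exists_gt x
    exact ⟨max b x', lt_max_of_lt_right hx',
      fun i => ⟨c i, hc i, hxc i, le_max_of_le_left (hb ⟨i, rfl⟩)⟩⟩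
  choose g hg hgs using hstep
  obtain ⟨x, hax, hx⟩ := exists_isLUB_iterate hreg hunc hseg hg a
  refine ⟨x, mem_iInter.2 fun i => ?_, hax⟩
  -- `s i` meets every interval `(g^[n] a, g^[n+1] a]`, so it accumulates at `x`
  have hlub : IsLUB (s i ∩ Iic x) x := isLUB_of_forall_exists_le hx inter_subset_right
    fun n => by
      obtain ⟨c, hc, hnc, hcn⟩ := hgs (g^[n] a) i
      refine ⟨c, ⟨hc, hcn.trans ?_⟩, hnc.le⟩
      simpa only [Function.iterate_succ_apply'] using hx.1 ⟨n + 1, rfl⟩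
  obtain ⟨c, hc, -, hcn⟩ := hgs a i
  exact (hs i).1 (s i ∩ Iic x) inter_subset_left
    ⟨c, hc, hcn.trans (hx.1 ⟨1, rfl⟩ : g a ≤ x)⟩ x hlub

lemma IsClubSet.mem_clubFilter {A : Set α} (hA : IsClubSet A) : A ∈ clubFilter α :=
  mem_generate_of_mem hA

lemma mem_clubFilter_iff [WellFoundedLT α] [NoMaxOrder α] (hreg : (#α).IsRegular)
    (hunc : ℵ₀ < #α) (hseg : ∀ x : α, #(Iio x) < #α) {A : Set α} :
    A ∈ clubFilter α ↔ ∃ c, IsClubSet c ∧ c ⊆ A := by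
  refine ⟨fun hA => ?_, fun ⟨c, hc, hcA⟩ => mem_of_superset hc.mem_clubFilter hcA⟩
  obtain ⟨t, hclub, hfin, htA⟩ := mem_generate_iff.1 hA
  refine ⟨⋂₀ t, ?_, htA⟩
  rw [sInter_eq_iInter]
  exact isClubSet_iInter hreg hunc hseg (hfin.lt_aleph0.trans hunc) fun c => hclub c.2

lemma isComplete'_clubFilter [WellFoundedLT α] [NoMaxOrder α] (hreg : (#α).IsRegular)
    (hunc : ℵ₀ < #α) (hseg : ∀ x : α, #(Iio x) < #α) :
    IsComplete' (#α) (clubFilter α) := by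
  intro ι hι s hs
  choose c hc hcs using fun i => (mem_clubFilter_iff hreg hunc hseg).1 (hs i)
  exact mem_of_superset (isClubSet_iInter hreg hunc hseg hι hc).mem_clubFilter
    (iInter_mono hcs)

lemma clubFilter_neBot [WellFoundedLT α] [NoMaxOrder α] [Nonempty α] (hreg : (#α).IsRegular)
    (hunc : ℵ₀ < #α) (hseg : ∀ x : α, #(Iio x) < #α) : (clubFilter α).NeBot := by
  refine forall_mem_nonempty_iff_neBot.1 fun A hA => ?_
  obtain ⟨c, hc, hcA⟩ := (mem_clubFilter_iff hreg hunc hseg).1 hA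
  exact hc.2.nonempty.mono hcA

lemma isUnboundedSet_of_frequently_clubFilter [NoMaxOrder α] {T : Set α}
    (hT : ∃ᶠ x in clubFilter α, x ∈ T) : IsUnboundedSet T := fun a =>
  (hT.and_eventually (isClubSet_Ioi a).mem_clubFilter).exists

def accPoints (T : Set α) : Set α := {x | IsLUB (T ∩ Iio x) x}

lemma isClubSet_accPoints [WellFoundedLT α] (hreg : (#α).IsRegular)
    (hunc : ℵ₀ < #α) (hseg : ∀ x : α, #(Iio x) < #α) {T : Set α} (hT : IsUnboundedSet T) :
    IsClubSet (accPoints T) := by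
  refine ⟨fun B hB _ x hx => ⟨fun c hc => hc.2.le, fun v hv => hx.2 fun b hb => ?_⟩,
    fun a => ?_⟩
  · exact (hB hb).2 fun c hc => hv ⟨hc.1, hc.2.trans_le (hx.1 hb)⟩
  choose g hgT hg using hT
  obtain ⟨x, hax, hx⟩ := exists_isLUB_iterate hreg hunc hseg hg a
  refine ⟨x, isLUB_of_forall_exists_le hx (fun c hc => hc.2.le) fun n => ?_, hax⟩
  have hsucc : ∀ m, g^[m + 1] a = g (g^[m] a) := fun m => Function.iterate_succ_apply' g m a
  refine ⟨g^[n + 1] a, ⟨hsucc n ▸ hgT _, ?_⟩, (hg _).le.trans_eq (hsucc n).symm⟩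
  exact (hsucc (n + 1) ▸ hg _).trans_le (hx.1 ⟨n + 2, rfl⟩)

lemma isUnboundedSet_diff_accPoints [WellFoundedLT α] {T : Set α} (hT : IsUnboundedSet T) :
    IsUnboundedSet (T \ accPoints T) := by
  intro a
  obtain ⟨t, ⟨htT, hat⟩, hmin⟩ := wellFounded_lt.has_min {c | c ∈ T ∧ a < c} (hT a)
  refine ⟨t, ⟨htT, fun ht => ?_⟩, hat⟩
  exact hat.not_ge (ht.2 fun c hc => not_lt.1 fun hac => hmin c ⟨hc.1, hac⟩ hc.2)

end LinearOrder

/-- Let `α` be (the order type of) an uncountable regular cardinal `λ = #α` and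
`Y` a set of cardinality `< λ`. For each `f : α → Y` there is a uniform
`λ`-complete filter `F` on `α` with `map f F = map f (clubFilter α)` which does
not mesh with the club filter. -/
theorem stmt_9 {α Y : Type u} [LinearOrder α] [IsWellOrder α (· < ·)]
    (hreg : (Cardinal.mk α).IsRegular) (hunc : Cardinal.aleph0 < Cardinal.mk α)
    (hseg : ∀ x : α, Cardinal.mk (Set.Iio x) < Cardinal.mk α)
    (hY : Cardinal.mk Y < Cardinal.mk α) (f : α → Y) :
    ∃ F : Filter α, IsUniform F ∧ IsComplete' (Cardinal.mk α) F ∧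
      Filter.map f F = Filter.map f (clubFilter α) ∧ Disjoint F (clubFilter α) := by
  have := noMaxOrder_of_mk_Iio_lt hreg.aleph0_le hseg
  have : Nonempty α := mk_ne_zero_iff.1 (aleph0_pos.trans hunc).ne'
  have := clubFilter_neBot hreg hunc hseg
  set S := {y | ∃ᶠ x in clubFilter α, f x = y}
  have hmap : map f (clubFilter α) = 𝓟 S :=
    map_eq_principal_of_isComplete' (isComplete'_clubFilter hreg hunc hseg) hY f
  obtain ⟨y₀, hy₀⟩ : S.Nonempty := principal_neBot_iff.1 (hmap ▸ map_neBot)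
  set T := f ⁻¹' {y₀}
  have hT : IsUnboundedSet T := isUnboundedSet_of_frequently_clubFilter hy₀
  set Z := T \ accPoints T
  choose p hp using fun y : S => y.2.exists
  obtain ⟨b, hb⟩ :=
    bddAbove_of_mk_lt hreg hseg (mk_range_le.trans_lt ((mk_set_le S).trans_lt hY))
  refine ⟨𝓟 (range p ∪ Z), isUniform_principal_iff.2 ?_, isComplete'_principal _ _, ?_, ?_⟩
  · exact (mk_set_le _).antisymm ((isUnboundedSet_diff_accPoints hT).mk_eq hreg hseg ▸
      mk_le_mk_of_subset subset_union_right)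
  · rw [map_principal, hmap, image_union, ← range_comp, show f ∘ p = (↑) from funext hp,
      Subtype.range_coe, union_eq_left.2]
    rintro _ ⟨x, ⟨hxT, -⟩, rfl⟩
    exact (show f x = y₀ from hxT) ▸ hy₀
  · refine disjoint_principal_left.2 (mem_of_superset (inter_mem
      (isClubSet_accPoints hreg hunc hseg hT).mem_clubFilter (isClubSet_Ioi b).mem_clubFilter) ?_)
    rintro x ⟨hxacc, hbx⟩ (⟨y, rfl⟩ | ⟨-, hxacc'⟩)
    · exact (hb ⟨y, rfl⟩).not_gt hbx
    · exact hxacc' hxacc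
end

section
/- Fiber-stability of countably based filters with codomain ℕ: for any set X and any countably based filter D on X, there is a function f : X → ℕ such that every member of D belongs to comap f (map f D), i.e., comap f (map f D) ≤ D in mathlib's filter order. -/
open Filter Set

/-- Fiber-stability of countably based filters with codomain `ℕ`. -/
theorem stmt_13 {X : Type*} (D : Filter X) [D.IsCountablyGenerated] :
    ∃ f : X → ℕ, Filter.comap f (Filter.map f D) ≤ D := by
  set K : Set X := D.ker with hK
  set E : Filter X := D ⊓ 𝓟 Kᶜ with hE
  obtain ⟨H, hH⟩ := E.exists_antitone_basis
  set G : ℕ → Set X := fun n => H n ∩ Kᶜ with hG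
  have hGanti : Antitone G := fun m n hmn =>
    inter_subset_inter_left _ (hH.antitone hmn)
  have hGE : ∀ n, G n ∈ E := fun n =>
    inter_mem (hH.toHasBasis.mem_of_mem trivial) (mem_inf_of_right (mem_principal_self _))
  -- intersection of G is empty
  have hkerE : E.ker = ∅ := by
    rw [hE, ker_inf, ker_principal]
    simp [hK]
  have hne : ∀ x : X, {n : ℕ | x ∉ G n}.Nonempty := by
    intro x
    by_contra h
    rw [Set.not_nonempty_iff_eq_empty] at h
    have hx : ∀ n, x ∈ G n := by
      intro n
      by_contra hx
      have hx' : n ∈ {n : ℕ | x ∉ G n} := hx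
      rw [h] at hx'
      exact hx'
    have : x ∈ E.ker := by
      rw [hH.toHasBasis.ker]
      exact mem_iInter₂.2 fun n _ => (hx n).1
    rw [hkerE] at this
    exact this
  classical
  set f : X → ℕ := fun x => if x ∈ K then 0 else sInf {n : ℕ | x ∉ G n} + 1 with hf
  -- key characterization
  have key : ∀ m : ℕ, ∀ x : X, x ∉ K → (x ∈ G m ↔ m + 2 ≤ f x) := by
    intro m x hx
    have hfx : f x = sInf {n : ℕ | x ∉ G n} + 1 := by simp [hf, hx]
    constructor
    · intro hxm
      rw [hfx]
      have : m + 1 ≤ sInf {n : ℕ | x ∉ G n} := by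
        by_contra h
        push_neg at h
        have hmem := Nat.sInf_mem (hne x)
        have hle : sInf {n : ℕ | x ∉ G n} ≤ m := Nat.lt_succ_iff.mp h
        exact hmem (hGanti hle hxm)
      omega
    · intro h
      rw [hfx] at h
      have hlt : m < sInf {n : ℕ | x ∉ G n} := by omega
      by_contra hxm
      exact absurd (Nat.sInf_le (show m ∈ {n : ℕ | x ∉ G n} from hxm)) (by omega)
  refine ⟨f, fun s hs => ?_⟩
  -- choose m with G m ⊆ s
  have hsE : s ∈ E := mem_inf_of_left hs
  obtain ⟨m, -, hm⟩ := hH.toHasBasis.mem_iff.mp hsE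
  have hGm : G m ⊆ s := (inter_subset_left).trans hm
  have hKs : K ⊆ s := sInter_subset_of_mem hs
  -- K ∪ G m ∈ D
  have hd : {x | x ∈ Kᶜ → x ∈ G m} ∈ D := by
    have := hGE m
    rwa [hE, mem_inf_principal] at this
  have huD : K ∪ G m ∈ D := by
    refine mem_of_superset hd fun x hx => ?_
    by_cases hxK : x ∈ K
    · exact Or.inl hxK
    · exact Or.inr (hx hxK)
  rw [mem_comap]
  refine ⟨f '' (K ∪ G m), image_mem_map huD, ?_⟩
  rintro x ⟨y, hy, hxy⟩
  rcases hy with hy | hy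
  · -- f y = 0, so f x = 0, so x ∈ K
    have hfy : f y = 0 := by simp [hf, hy]
    have hfx : f x = 0 := hxy ▸ hfy
    have hxK : x ∈ K := by
      by_contra hxK
      simp [hf, hxK] at hfx
    exact hKs hxK
  · have hyK : y ∉ K := hy.2
    have hfy : m + 2 ≤ f y := (key m y hyK).1 hy
    have hfx : m + 2 ≤ f x := hxy ▸ hfy
    have hxK : x ∉ K := by
      intro hxK
      simp only [hf, if_pos hxK] at hfx
      omega
    exact hGm ((key m x hxK).2 hfx)
end

section
/- In a regular uncountable cardinal λ, for any partition of λ into fibers of a map to a set of size < λ, there exists a closed unbounded set C ⊆ λ such that for every fiber P of cardinality λ, both P ∩ C and P \ C have cardinality λ. -/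
open Set

variable {α : Type u}

/-!
Since `λ` is regular and every initial segment is small, a subset of `λ` has cardinality `λ`
exactly when it is unbounded. Fix `j` with `a < j a` such that every unbounded fiber meets each
interval `(a, j a)`, and an unbounded set `A` of gap points spaced so that `j (j a) < b` for
`a < b` in `A` (the range of a transfinite sequence, each term chosen above the `j (j ·)`-images
of the earlier ones, which regularity allows). The club is the complement of the gaps
`(a, j a)`, `a ∈ A`: each gap carries points of every unbounded fiber outside `C`, and each
interval `[j a, j (j a))` lies in `C` and carries points of every unbounded fiber inside `C`.
-/

section ClosedSets

variable [LinearOrder α]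

theorem isClosedSet_compl_Ioo (a b : α) : IsClosedSet (Ioo a b)ᶜ := by
  intro B hB _ x hx ⟨hax, hxb⟩
  obtain ⟨c, hcB, hac⟩ : ∃ c ∈ B, a < c := by
    by_contra! h
    exact (hx.2 h).not_gt hax
  exact hB hcB ⟨hac, (hx.1 hcB).trans_lt hxb⟩

theorem isClosedSet_biInter {ι : Type*} {s : Set ι} {A : ι → Set α}
    (h : ∀ i ∈ s, IsClosedSet (A i)) : IsClosedSet (⋂ i ∈ s, A i) :=
  fun B hB hne x hx => mem_iInter₂.2 fun i hi =>
    h i hi B (hB.trans (biInter_subset_of_mem hi)) hne x hx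

end ClosedSets

section RegularOrder

open Cardinal

variable [LinearOrder α]

theorem mk_Iic_lt_of_aleph0_le (hα : ℵ₀ ≤ #α) (hseg : ∀ x : α, #(Iio x) < #α) (x : α) :
    #(Iic x) < #α :=
  calc #(Iic x) = #(insert x (Iio x) : Set α) := by rw [Iio_insert]
    _ ≤ #(Iio x) + 1 := mk_insert_le
    _ < #α := add_lt_of_lt hα (hseg x) (one_lt_aleph0.trans_le hα)

theorem exists_forall_lt_of_mk_lt (hreg : (#α).IsRegular) (hseg : ∀ x : α, #(Iio x) < #α)
    {B : Set α} (hB : #B < #α) : ∃ u, ∀ b ∈ B, b < u := by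
  by_contra! h
  have hcover : (univ : Set α) ⊆ ⋃ b : B, Iic (b : α) := fun u _ =>
    let ⟨b, hbB, hub⟩ := h u
    mem_iUnion.2 ⟨⟨b, hbB⟩, hub⟩
  have hsum : #α ≤ sum fun b : B => #(Iic (b : α)) :=
    calc #α = #(univ : Set α) := mk_univ.symm
      _ ≤ #(⋃ b : B, Iic (b : α)) := mk_le_mk_of_subset hcover
      _ ≤ _ := mk_iUnion_le_sum_mk
  exact hsum.not_gt <| sum_lt_of_isRegular hreg hB fun b =>
    mk_Iic_lt_of_aleph0_le hreg.aleph0_le hseg b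

theorem exists_gt_forall_lt (hreg : (#α).IsRegular) (hseg : ∀ x : α, #(Iio x) < #α)
    {ι : Type u} (hι : #ι < #α) (a : α) (g : ι → α) : ∃ u, a < u ∧ ∀ i, g i < u := by
  have hsmall : #(insert a (range g) : Set α) < #α :=
    calc #(insert a (range g) : Set α) ≤ #(range g) + 1 := mk_insert_le
      _ ≤ #ι + 1 := add_le_add_left mk_range_le 1
      _ < #α := add_lt_of_lt hreg.aleph0_le hι (one_lt_aleph0.trans_le hreg.aleph0_le)
  obtain ⟨u, hu⟩ := exists_forall_lt_of_mk_lt hreg hseg hsmall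
  exact ⟨u, hu a (mem_insert a _), fun i => hu (g i) (mem_insert_of_mem a ⟨i, rfl⟩)⟩

theorem isUnboundedSet_of_mk_eq (hα : ℵ₀ ≤ #α) (hseg : ∀ x : α, #(Iio x) < #α)
    {B : Set α} (hB : #B = #α) : IsUnboundedSet B := by
  by_contra! h
  obtain ⟨a, ha⟩ : ∃ a, B ⊆ Iic a := by simpa [IsUnboundedSet, subset_def] using h
  exact (hB ▸ (mk_le_mk_of_subset ha).trans_lt (mk_Iic_lt_of_aleph0_le hα hseg a)).false

theorem mk_eq_of_isUnboundedSet (hreg : (#α).IsRegular) (hseg : ∀ x : α, #(Iio x) < #α)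
    {B : Set α} (hB : IsUnboundedSet B) : #B = #α := by
  refine (mk_set_le B).antisymm (not_lt.1 fun hlt => ?_)
  obtain ⟨u, hu⟩ := exists_forall_lt_of_mk_lt hreg hseg hlt
  obtain ⟨b, hbB, hub⟩ := hB u
  exact (hu b hbB).not_gt hub

theorem exists_gt_forall_inter_Ioo_nonempty (hreg : (#α).IsRegular)
    (hseg : ∀ x : α, #(Iio x) < #α) {ι : Type u} (hι : #ι < #α) (P : ι → Set α)
    (a : α) :
    ∃ u, a < u ∧ ∀ i, IsUnboundedSet (P i) → (P i ∩ Ioo a u).Nonempty := by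
  have hpick : ∀ i, ∃ b, IsUnboundedSet (P i) → b ∈ P i ∧ a < b := fun i => by
    by_cases hi : IsUnboundedSet (P i)
    · obtain ⟨b, hb, hab⟩ := hi a
      exact ⟨b, fun _ => ⟨hb, hab⟩⟩
    · exact ⟨a, fun h => (hi h).elim⟩
  choose g hg using hpick
  obtain ⟨u, hau, hgu⟩ := exists_gt_forall_lt hreg hseg hι a g
  exact ⟨u, hau, fun i hi => ⟨g i, (hg i hi).1, (hg i hi).2, hgu i⟩⟩

theorem exists_isUnboundedSet_forall_lt_imp_lt [IsWellOrder α (· < ·)]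
    (hreg : (#α).IsRegular) (hseg : ∀ x : α, #(Iio x) < #α) (J : α → α)
    (hJ : ∀ a, a < J a) :
    ∃ A : Set α, IsUnboundedSet A ∧ ∀ a ∈ A, ∀ b ∈ A, a < b → J a < b := by
  choose bd hbd_gt hbd_lt using fun (x : α) (g : Iio x → α) =>
    exists_gt_forall_lt hreg hseg (hseg x) x g
  let c : α → α := IsWellFounded.fix (· < ·) fun x ih => bd x fun z => J (ih z z.2)
  have hc : ∀ x, c x = bd x fun z : Iio x => J (c z) := IsWellFounded.fix_eq _ _
  have hJc : ∀ {z x}, z < x → J (c z) < c x := fun {z x} hzx => by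
    rw [hc x]
    exact hbd_lt x (fun z : Iio x => J (c z)) ⟨z, hzx⟩
  have hmono : StrictMono c := fun z x hzx => (hJ (c z)).trans (hJc hzx)
  refine ⟨range c, fun x => ⟨c x, mem_range_self x, ?_⟩, ?_⟩
  · rw [hc x]
    exact hbd_gt x _
  · rintro _ ⟨z, rfl⟩ _ ⟨x, rfl⟩ hzx
    exact hJc (hmono.lt_iff_lt.1 hzx)

end RegularOrder

theorem Ico_subset_biInter_compl_Ioo [LinearOrder α] {j : α → α} (hj : ∀ a, a < j a)
    {A : Set α} (hA : ∀ a ∈ A, ∀ b ∈ A, a < b → j (j a) < b) {a : α} (ha : a ∈ A) :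
    Ico (j a) (j (j a)) ⊆ ⋂ b ∈ A, (Ioo b (j b))ᶜ := by
  rintro s ⟨hjs, hsjj⟩
  refine mem_iInter₂.2 fun b hb ⟨hbs, hsjb⟩ => ?_
  rcases lt_trichotomy a b with hab | rfl | hba
  · exact (hsjj.trans (hA a ha b hb hab)).not_gt hbs
  · exact hjs.not_gt hsjb
  · exact ((hj (j b)).trans ((hA b hb a ha hba).trans ((hj a).trans_le hjs))).not_gt hsjb

theorem stmt_17_general {α Y : Type u} [LinearOrder α] [IsWellOrder α (· < ·)]
    (hreg : (Cardinal.mk α).IsRegular)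
    (hseg : ∀ x : α, Cardinal.mk (Set.Iio x) < Cardinal.mk α)
    (hY : Cardinal.mk Y < Cardinal.mk α) (f : α → Y) :
    ∃ C : Set α, IsClubSet C ∧ ∀ y : Y,
      Cardinal.mk (f ⁻¹' {y} : Set α) = Cardinal.mk α →
        Cardinal.mk ((f ⁻¹' {y}) ∩ C : Set α) = Cardinal.mk α ∧
        Cardinal.mk ((f ⁻¹' {y}) \ C : Set α) = Cardinal.mk α := by
  obtain ⟨j, hj, hjP⟩ : ∃ j : α → α, (∀ a, a < j a) ∧
      ∀ a y, IsUnboundedSet (f ⁻¹' {y}) → (f ⁻¹' {y} ∩ Ioo a (j a)).Nonempty := by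
    choose j hj hjP using exists_gt_forall_inter_Ioo_nonempty hreg hseg hY (fun y => f ⁻¹' {y})
    exact ⟨j, hj, hjP⟩
  obtain ⟨A, hA, hAsparse⟩ := exists_isUnboundedSet_forall_lt_imp_lt hreg hseg (j ∘ j)
    fun a => (hj a).trans (hj (j a))
  refine ⟨⋂ a ∈ A, (Ioo a (j a))ᶜ,
    ⟨isClosedSet_biInter fun a _ => isClosedSet_compl_Ioo a _, fun x => ?_⟩, fun y hy => ?_⟩
  · obtain ⟨a, ha, hxa⟩ := hA x
    exact ⟨j a, Ico_subset_biInter_compl_Ioo hj hAsparse ha ⟨le_rfl, hj (j a)⟩,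
      hxa.trans (hj a)⟩
  have hP := isUnboundedSet_of_mk_eq hreg.aleph0_le hseg hy
  refine ⟨mk_eq_of_isUnboundedSet hreg hseg fun x => ?_, mk_eq_of_isUnboundedSet hreg hseg
    fun x => ?_⟩
  · obtain ⟨a, ha, hxa⟩ := hA x
    obtain ⟨b, hbP, hjb, hbjj⟩ := hjP (j a) y hP
    exact ⟨b, ⟨hbP, Ico_subset_biInter_compl_Ioo hj hAsparse ha ⟨hjb.le, hbjj⟩⟩,
      (hxa.trans (hj a)).trans hjb⟩
  · obtain ⟨a, ha, hxa⟩ := hA x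
    obtain ⟨b, hbP, hab, hbj⟩ := hjP a y hP
    exact ⟨b, ⟨hbP, fun hbC => mem_iInter₂.1 hbC a ha ⟨hab, hbj⟩⟩, hxa.trans hab⟩

/-- For `λ = #α` regular uncountable and `f : α → Y` with `#Y < λ`, there is a
club `C ⊆ α` such that every fiber of `f` of cardinality `λ` meets both `C` and
its complement in sets of cardinality `λ`. -/
theorem stmt_17 {α Y : Type u} [LinearOrder α] [IsWellOrder α (· < ·)]
    (hreg : (Cardinal.mk α).IsRegular) (hunc : Cardinal.aleph0 < Cardinal.mk α)
    (hseg : ∀ x : α, Cardinal.mk (Set.Iio x) < Cardinal.mk α)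
    (hY : Cardinal.mk Y < Cardinal.mk α) (f : α → Y) :
    ∃ C : Set α, IsClubSet C ∧ ∀ y : Y,
      Cardinal.mk (f ⁻¹' {y} : Set α) = Cardinal.mk α →
        Cardinal.mk ((f ⁻¹' {y}) ∩ C : Set α) = Cardinal.mk α ∧
        Cardinal.mk ((f ⁻¹' {y}) \ C : Set α) = Cardinal.mk α :=
  stmt_17_general hreg hseg hY f
end
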